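/- Let R be a Rota-Baxter operator of weight λ ≠ 0 on H_d. Then R(e0) ∈ {0, -λ e0}. That is, applying the Rota-Baxter identity to x = y = e0 and using the structure of H_d forces the e0-component a of R(e0) to satisfy a² + λa = 0 together with the vanishing of the pure part of R(e0). -/

import Mathlib

noncomputable section

/-- The dual quaternion algebra `H_d`, realized as the trivial square-zero
extension of `ℝ` by `ℝ³`; its multiplication is
`(x0,v)·(y0,w) = (x0 y0, x0 • w + y0 • v)`, matching the dual quaternion product. -/
abbrev Hd : Type := TrivSqZeroExt ℝ (Fin 3 → ℝ)

/-- Basis element `e0` (the identity). -/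
def e0 : Hd := 1
/-- Basis element `e1`. -/
def e1 : Hd := TrivSqZeroExt.inr (Pi.single 0 1)
/-- Basis element `e2`. -/
def e2 : Hd := TrivSqZeroExt.inr (Pi.single 1 1)
/-- Basis element `e3`. -/
def e3 : Hd := TrivSqZeroExt.inr (Pi.single 2 1)

/-- The element `x0 e0 + x1 e1 + x2 e2 + x3 e3` of `H_d`. -/
def mk (x0 x1 x2 x3 : ℝ) : Hd := x0 • e0 + x1 • e1 + x2 • e2 + x3 • e3

/-- `R` is a Rota-Baxter operator of weight `lam` on `H_d`. -/
def RotaBaxter (lam : ℝ) (R : Hd →ₗ[ℝ] Hd) : Prop :=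
  ∀ x y : Hd, R x * R y = R (R x * y) + R (x * R y) + lam • R (x * y)


/-! Write `u = R 1`. In any commutative algebra, the Rota-Baxter identity at `(1, 1)` and `(1, u)`
gives `6 R(u²) = 2u³ - 3λu² + λ²u`. In a trivial square-zero extension `u² = 2a u - a²`, where `a`
is the scalar part of `u`, so `R(u²) = 2a R(u) - a² u` as well; comparing the square-zero parts of
the two expressions for `6 R(u²)` leaves `λ² v = 0` for the pure part `v` of `u`. Hence `u = a`, and
the identity at `(1, 1)` collapses to `a² + λa = 0`. -/

section RotaBaxterIdentities

variable {K A : Type*} [CommRing K] [CommRing A] [Algebra K A] {lam : K} {R : A →ₗ[K] A}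

theorem sq_map_one
    (hR : ∀ x y, R x * R y = R (R x * y) + R (x * R y) + lam • R (x * y)) :
    R 1 ^ 2 = (2 : K) • R (R 1) + lam • R 1 := by
  rw [sq, hR, mul_one, one_mul, mul_one, two_smul]

theorem six_smul_map_sq_map_one
    (hR : ∀ x y, R x * R y = R (R x * y) + R (x * R y) + lam • R (x * y)) :
    (6 : K) • R (R 1 ^ 2) = (2 : K) • R 1 ^ 3 - (3 * lam) • R 1 ^ 2 + lam ^ 2 • R 1 := by
  set u := R 1
  have hsq : u ^ 2 = (2 : K) • R u + lam • u := sq_map_one hR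
  have hRsq : R (u ^ 2) = (2 : K) • R (R u) + lam • R u := by
    rw [hsq, map_add, map_smul, map_smul]
  have hmul : u * R u = R (u ^ 2) + R (R u) + lam • R u := by
    simpa only [one_mul, sq] using hR 1 u
  have hcube : u ^ 3 = (2 : K) • (u * R u) + lam • u ^ 2 := by
    conv_lhs => rw [pow_succ', hsq]
    rw [mul_add, mul_smul_comm, mul_smul_comm, ← sq]
  linear_combination (norm := module)
    (-2 : K) • hcube - (4 : K) • hmul + (2 : K) • hRsq + lam • hsq

theorem sq_add_mul_smul_one_eq_zero
    (hR : ∀ x y, R x * R y = R (R x * y) + R (x * R y) + lam • R (x * y)) {a : K}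
    (h1 : R 1 = a • 1) : (a ^ 2 + lam * a) • (1 : A) = 0 := by
  have h := sq_map_one hR
  rw [h1, map_smul, h1, smul_pow, one_pow] at h
  linear_combination (norm := module) -h

end RotaBaxterIdentities

namespace TrivSqZeroExt

variable {K M : Type*} [CommRing K] [AddCommGroup M] [Module K M] [Module Kᵐᵒᵖ M]
  [IsCentralScalar K M]

theorem sq_eq_two_fst_smul_sub (x : TrivSqZeroExt K M) :
    x ^ 2 = (2 * x.fst) • x - x.fst ^ 2 • 1 := by
  ext
  · simp only [fst_pow, fst_sub, fst_smul, fst_one, smul_eq_mul]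
    ring
  · simp only [snd_pow, snd_sub, snd_smul, snd_one, smul_zero, sub_zero, Nat.pred_succ,
      pow_one]
    module

theorem sq_smul_snd_map_one_eq_zero {lam : K} {R : TrivSqZeroExt K M →ₗ[K] TrivSqZeroExt K M}
    (hR : ∀ x y, R x * R y = R (R x * y) + R (x * R y) + lam • R (x * y)) :
    lam ^ 2 • (R 1).snd = 0 := by
  set u := R 1
  set a := u.fst
  have hRsq : R (u ^ 2) = (2 * a) • R u - a ^ 2 • u := by
    rw [sq_eq_two_fst_smul_sub, map_sub, map_smul, map_smul]
  have h2 := congrArg snd (sq_map_one hR)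
  have h6 := congrArg snd (six_smul_map_sq_map_one hR)
  rw [hRsq] at h6
  simp only [snd_pow, snd_add, snd_sub, snd_smul, Nat.pred_succ] at h2 h6
  linear_combination (norm := module) -h6 - (6 * a) • h2

end TrivSqZeroExt

/-- For a Rota-Baxter operator `R` of weight `λ ≠ 0` on `H_d`, one has
`R(e0) ∈ {0, -λ e0}`: the `e0`-component `a` of `R(e0)` satisfies
`a² + λ a = 0` and the pure part of `R(e0)` vanishes. -/
theorem stmt12 (lam : ℝ) (hlam : lam ≠ 0) (R : Hd →ₗ[ℝ] Hd)
    (hR : RotaBaxter lam R) :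
    (R e0 = 0 ∨ R e0 = -lam • e0) ∧
    (TrivSqZeroExt.fst (R e0)) ^ 2 + lam * TrivSqZeroExt.fst (R e0) = 0 ∧
    TrivSqZeroExt.snd (R e0) = 0 := by
  have hsnd : (R e0).snd = 0 :=
    (smul_eq_zero.mp (TrivSqZeroExt.sq_smul_snd_map_one_eq_zero hR)).resolve_left
      (pow_ne_zero 2 hlam)
  set a := (R e0).fst
  have hRe0 : R e0 = a • e0 := by
    refine TrivSqZeroExt.ext (by simp [e0, a]) ?_
    rw [hsnd]
    simp [e0]
  have hquad : a ^ 2 + lam * a = 0 := by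
    simpa using congrArg TrivSqZeroExt.fst (sq_add_mul_smul_one_eq_zero hR hRe0)
  refine ⟨?_, hquad, hsnd⟩
  rcases mul_eq_zero.mp (show a * (a + lam) = 0 by linear_combination hquad) with ha | ha
  · left
    rw [hRe0, ha, zero_smul]
  · right
    rw [hRe0, eq_neg_of_add_eq_zero_left ha]
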